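/- Let W* = (I − W)⁻¹ for an N×N real matrix W with I − W invertible, and let s = αᵀW*, e = W*ω, for α, ω ∈ ℝ^N. Then the mixed third-order partial derivative ∂³Z/(∂W_{i₁j₁} ∂W_{i₂j₂} ∂W_{i₃j₃}) of Z = αᵀW*ω equals the sum over all 6 permutations (i'₁,j'₁),(i'₂,j'₂),(i'₃,j'₃) of the three index pairs of s_{i'₁} · W*_{j'₁ i'₂} · W*_{j'₂ i'₃} · e_{j'₃}. -/

import Mathlib

/-!
Write `Q = (1 - W)⁻¹`. Along a line, `s ↦ (A - s • B)⁻¹` has derivative `A⁻¹ * B * A⁻¹` at `0`,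
so by the Leibniz rule differentiating an interleaved product `Q * C₁ * Q * ⋯ * Cₖ * Q` in
direction `B` inserts `B` into each of the `k + 1` slots: exactly the words of
`List.permutations'Aux B [C₁, …, Cₖ]`. Three differentiations therefore produce the `3!` words
of `List.permutations' [E₀, E₁, E₂]`, and for matrix units `E = single i j 1` the pairing
`α ⬝ᵥ (Q * E * Q * E' * Q * E'' * Q) *ᵥ ω` factors as
`(α ᵥ* Q) i * Q j i' * Q j' i'' * (Q *ᵥ ω) j''`.
-/

open Matrix

open Filter Topology List

section InterleavedProducts

variable {𝔸 : Type*} [Mul 𝔸] in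
def interleaveProd (Q : 𝔸) : List 𝔸 → 𝔸
  | [] => Q
  | C :: Cs => Q * C * interleaveProd Q Cs

variable {𝔸 : Type*} [Mul 𝔸] [Add 𝔸] [Zero 𝔸] in
def interleaveSum (Q : 𝔸) (S : List (List 𝔸)) : 𝔸 :=
  (S.map (interleaveProd Q)).sum

variable {𝕜 𝔸 F : Type*} [NontriviallyNormedField 𝕜] [NormedRing 𝔸] [NormedAlgebra 𝕜 𝔸]
  [NormedAddCommGroup F] [NormedSpace 𝕜 F]

theorem hasDerivAt_interleaveProd {f : 𝕜 → 𝔸} {B : 𝔸} {t : 𝕜}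
    (hf : HasDerivAt f (f t * B * f t) t) (Cs : List 𝔸) :
    HasDerivAt (fun s => interleaveProd (f s) Cs)
      (interleaveSum (f t) (permutations'Aux B Cs)) t := by
  induction Cs with
  | nil => simpa [interleaveSum, interleaveProd] using hf
  | cons C Cs ih =>
    convert (hf.mul_const C).fun_mul ih using 1
    · simp only [interleaveProd, mul_assoc]
    · simp [interleaveSum, interleaveProd, Function.comp_def, List.sum_map_mul_left, mul_assoc]

theorem hasDerivAt_interleaveSum {f : 𝕜 → 𝔸} {B : 𝔸} {t : 𝕜}
    (hf : HasDerivAt f (f t * B * f t) t) (S : List (List 𝔸)) :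
    HasDerivAt (fun s => interleaveSum (f s) S)
      (interleaveSum (f t) (S.flatMap (permutations'Aux B))) t := by
  induction S with
  | nil => simpa [interleaveSum] using hasDerivAt_const t (0 : 𝔸)
  | cons Cs S ih =>
    simpa [interleaveSum] using (hasDerivAt_interleaveProd hf Cs).fun_add ih

variable [HasSummableGeomSeries 𝔸]

theorem hasDerivAt_ringInverse_sub_smul {A : 𝔸} (hA : IsUnit A) (B : 𝔸) :
    HasDerivAt (fun s : 𝕜 => Ring.inverse (A - s • B))
      (Ring.inverse A * B * Ring.inverse A) 0 := by
  obtain ⟨u, rfl⟩ := hA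
  have hline : HasDerivAt (fun s : 𝕜 => (u : 𝔸) - s • B) (-B) 0 := by
    simpa using ((hasDerivAt_id (0 : 𝕜)).smul_const B).const_sub (u : 𝔸)
  have := (hasFDerivAt_ringInverse (𝕜 := 𝕜) u).comp_hasDerivAt_of_eq (x := 0) hline (by simp)
  simpa [Function.comp_def, mul_assoc] using this

theorem eventually_isUnit_sub_smul {A : 𝔸} (hA : IsUnit A) (B : 𝔸) :
    ∀ᶠ s : 𝕜 in 𝓝 0, IsUnit (A - s • B) := by
  have hcont : Continuous fun s : 𝕜 => A - s • B := by fun_prop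
  have hmem : {x : 𝔸 | IsUnit x} ∈ 𝓝 (A - (0 : 𝕜) • B) := by
    simpa using Units.isOpen.mem_nhds hA
  exact hcont.continuousAt.eventually_mem hmem

theorem hasDerivAt_of_eq_interleaveSum_inverse (L : 𝔸 →L[𝕜] F) {A : 𝔸} (hA : IsUnit A)
    {B : 𝔸} {S : List (List 𝔸)} {g : 𝕜 → F}
    (hg : ∀ s, IsUnit (A - s • B) → g s = L (interleaveSum (Ring.inverse (A - s • B)) S)) :
    HasDerivAt g (L (interleaveSum (Ring.inverse A) (S.flatMap (permutations'Aux B)))) 0 := by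
  have hinv : HasDerivAt (fun s : 𝕜 => Ring.inverse (A - s • B))
      (Ring.inverse (A - (0 : 𝕜) • B) * B * Ring.inverse (A - (0 : 𝕜) • B)) 0 := by
    simpa using hasDerivAt_ringInverse_sub_smul hA B
  have h := L.hasFDerivAt.comp_hasDerivAt (0 : 𝕜) (hasDerivAt_interleaveSum hinv S)
  simp only [zero_smul, sub_zero] at h
  refine h.congr_of_eventuallyEq ?_
  filter_upwards [eventually_isUnit_sub_smul hA B] with s hs
  exact hg s hs

theorem hasDerivAt_deriv_deriv_inverse_one_sub (L : 𝔸 →L[𝕜] F) {W : 𝔸} (hW : IsUnit (1 - W))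
    (E₀ E₁ E₂ : 𝔸) :
    HasDerivAt
      (fun u : 𝕜 => deriv (fun v : 𝕜 => deriv (fun w : 𝕜 =>
        L (Ring.inverse (1 - (W + u • E₀ + v • E₁ + w • E₂)))) 0) 0)
      (L (interleaveSum (Ring.inverse (1 - W)) (permutations' [E₀, E₁, E₂]))) 0 := by
  have h₁ : ∀ u v : 𝕜, IsUnit (1 - (W + u • E₀ + v • E₁)) →
      deriv (fun w : 𝕜 => L (Ring.inverse (1 - (W + u • E₀ + v • E₁ + w • E₂)))) 0 =
        L (interleaveSum (Ring.inverse (1 - (W + u • E₀ + v • E₁))) (permutations' [E₂])) :=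
    fun u v huv => (hasDerivAt_of_eq_interleaveSum_inverse (S := [[]]) L huv fun w _ => by
      simp [interleaveSum, interleaveProd, sub_add_eq_sub_sub]).deriv
  have h₂ : ∀ u : 𝕜, IsUnit (1 - (W + u • E₀)) →
      HasDerivAt (fun v : 𝕜 => deriv (fun w : 𝕜 =>
        L (Ring.inverse (1 - (W + u • E₀ + v • E₁ + w • E₂)))) 0)
        (L (interleaveSum (Ring.inverse (1 - (W + u • E₀))) (permutations' [E₁, E₂]))) 0 :=
    fun u hu => hasDerivAt_of_eq_interleaveSum_inverse L hu fun v hv => by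
      rw [h₁ u v (by rwa [sub_add_eq_sub_sub]), sub_add_eq_sub_sub]
  exact hasDerivAt_of_eq_interleaveSum_inverse L hW fun u hu => by
    rw [(h₂ u (by rwa [sub_add_eq_sub_sub])).deriv, sub_add_eq_sub_sub]

end InterleavedProducts

theorem Equiv.Perm.sum_fin_three {M : Type*} [AddCommMonoid M] (f : Fin 3 → Fin 3 → Fin 3 → M) :
    ∑ σ : Equiv.Perm (Fin 3), f (σ 0) (σ 1) (σ 2) =
      f 0 1 2 + f 0 2 1 + f 1 0 2 + f 1 2 0 + f 2 0 1 + f 2 1 0 := by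
  rw [show (Finset.univ : Finset (Equiv.Perm (Fin 3))) =
    {1, Equiv.swap 1 2, Equiv.swap 0 1, finRotate 3, finRotate 3 * finRotate 3, Equiv.swap 0 2}
    by decide]
  simp +decide [Finset.sum_insert, Equiv.swap_apply_of_ne_of_ne]
  abel

section MatrixEntries

variable {n R : Type*} [Fintype n] [DecidableEq n] [Semiring R]

theorem mulVec_mul_single_mul_apply (A B : Matrix n n R) (i j k : n) (ω : n → R) :
    ((A * single i j 1 * B) *ᵥ ω) k = A k i * (B *ᵥ ω) j := by
  rw [← mulVec_mulVec, ← mulVec_mulVec, single_mulVec]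
  simp [mulVec, dotProduct, Function.update_apply]

theorem dotProduct_mul_single_mul_mulVec (A B : Matrix n n R) (i j : n) (α ω : n → R) :
    α ⬝ᵥ ((A * single i j 1 * B) *ᵥ ω) = (α ᵥ* A) i * (B *ᵥ ω) j := by
  simp only [dotProduct, mulVec_mul_single_mul_apply, vecMul, Finset.sum_mul]
  simp only [mul_assoc]

theorem dotProduct_interleaveProd_single_mulVec (Q : Matrix n n R) (α ω : n → R)
    (p q r : n × n) :
    α ⬝ᵥ (interleaveProd Q [single p.1 p.2 1, single q.1 q.2 1, single r.1 r.2 1] *ᵥ ω) =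
      (α ᵥ* Q) p.1 * Q p.2 q.1 * Q q.2 r.1 * (Q *ᵥ ω) r.2 := by
  rw [interleaveProd, interleaveProd, interleaveProd, interleaveProd,
    dotProduct_mul_single_mul_mulVec, mulVec_mul_single_mul_apply, mulVec_mul_single_mul_apply]
  simp only [mul_assoc]

theorem dotProduct_interleaveSum_permutations'_single_mulVec (Q : Matrix n n R)
    (α ω : n → R) (τ : Fin 3 → n × n) :
    α ⬝ᵥ (interleaveSum Q (permutations'
        [single (τ 0).1 (τ 0).2 1, single (τ 1).1 (τ 1).2 1, single (τ 2).1 (τ 2).2 1]) *ᵥ ω) =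
      ∑ σ : Equiv.Perm (Fin 3), (α ᵥ* Q) (τ (σ 0)).1 * Q (τ (σ 0)).2 (τ (σ 1)).1 *
        Q (τ (σ 1)).2 (τ (σ 2)).1 * (Q *ᵥ ω) (τ (σ 2)).2 := by
  rw [Equiv.Perm.sum_fin_three fun a b c => (α ᵥ* Q) (τ a).1 * Q (τ a).2 (τ b).1 *
    Q (τ b).2 (τ c).1 * (Q *ᵥ ω) (τ c).2]
  simp only [interleaveSum, permutations', permutations'Aux, flatMap_cons, flatMap_nil,
    append_nil, map_cons, map_nil, cons_append, nil_append, sum_cons, sum_nil, add_zero,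
    add_mulVec, dotProduct_add, dotProduct_interleaveProd_single_mulVec]
  abel

end MatrixEntries

-- Any norm would do: it only serves to make `Ring.inverse` differentiable on matrices.
attribute [local instance] Matrix.linftyOpNormedRing Matrix.linftyOpNormedAlgebra

noncomputable def dotProductMulVecCLM {n : Type*} [Fintype n] (α ω : n → ℝ) :
    Matrix n n ℝ →L[ℝ] ℝ :=
  LinearMap.toContinuousLinearMap
    { toFun := fun M => α ⬝ᵥ (M *ᵥ ω)
      map_add' := fun M M' => by simp [add_mulVec, dotProduct_add]
      map_smul' := fun c M => by simp [smul_mulVec, dotProduct_smul] }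

theorem dotProductMulVecCLM_apply {n : Type*} [Fintype n] (α ω : n → ℝ) (M : Matrix n n ℝ) :
    dotProductMulVecCLM α ω M = α ⬝ᵥ (M *ᵥ ω) := rfl

theorem stmt_7 {N : ℕ} (W : Matrix (Fin N) (Fin N) ℝ) (h : IsUnit (1 - W).det)
    (α ω : Fin N → ℝ) (τ : Fin 3 → Fin N × Fin N) :
    HasDerivAt
      (fun u : ℝ =>
        deriv
          (fun v : ℝ =>
            deriv
              (fun w : ℝ =>
                α ⬝ᵥ ((1 - (W + u • Matrix.single (τ 0).1 (τ 0).2 (1 : ℝ)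
                              + v • Matrix.single (τ 1).1 (τ 1).2 (1 : ℝ)
                              + w • Matrix.single (τ 2).1 (τ 2).2 (1 : ℝ)))⁻¹ *ᵥ ω)) 0) 0)
      (∑ σ : Equiv.Perm (Fin 3),
        (α ᵥ* (1 - W)⁻¹) (τ (σ 0)).1 *
          ((1 - W)⁻¹) (τ (σ 0)).2 (τ (σ 1)).1 *
          ((1 - W)⁻¹) (τ (σ 1)).2 (τ (σ 2)).1 *
          ((1 - W)⁻¹ *ᵥ ω) (τ (σ 2)).2) 0 := by
  have key := hasDerivAt_deriv_deriv_inverse_one_sub (dotProductMulVecCLM α ω)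
    ((isUnit_iff_isUnit_det (1 - W)).2 h) (single (τ 0).1 (τ 0).2 1) (single (τ 1).1 (τ 1).2 1)
    (single (τ 2).1 (τ 2).2 1)
  simp only [← nonsing_inv_eq_ringInverse] at key
  exact key.congr_deriv ((dotProductMulVecCLM_apply α ω _).trans
    (dotProduct_interleaveSum_permutations'_single_mulVec _ α ω τ))
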